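/- arXiv:1104.0755 — 2 statements merged into one kernel-verified Lean document; each statement's English description precedes it below -/
import Mathlib

section
/- Let q be a real number with 0 < q < 1. For every real x > 0, the function u(x) = exp(πi · log x / log q) · Ai_q(-x) satisfies the q-difference equation u(q²x) + x·u(qx) − u(x) = 0; that is, exp(πi·log(q²x)/log q)·Ai_q(-q²x) + x·exp(πi·log(qx)/log q)·Ai_q(-qx) − exp(πi·log x/log q)·Ai_q(-x) = 0. -/
open scoped BigOperators

/-- The finite q-Pochhammer symbol `(a;q)_n`. -/
noncomputable def qPoch (q a : ℂ) (n : ℕ) : ℂ := ∏ j ∈ Finset.range n, (1 - a * q ^ j)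

/-- The q-Airy function `Ai_q(x)`. -/
noncomputable def qAiry (q x : ℂ) : ℂ :=
  ∑' n : ℕ, (-1) ^ n * q ^ (n * (n - 1) / 2) * (-x) ^ n / (qPoch q (-q) n * qPoch q q n)

/-!
With `T_n(x)` the `n`-th term of the series of `Ai_q(x)`, the ratio
`T_{n+1}(x) / T_n(x) = x q^n / (1 - q^{2n+2})` tends to `0`, so the series converges, and it gives
`T_{n+1}(q² x) - T_{n+1}(x) = (q^{2n+2} - 1) T_{n+1}(x) = -x q^n T_n(x) = -x T_n(q x)`.
Summing over `n` shows that `Ai_q` itself solves `u(q² x) + x u(q x) - u(x) = 0`. The factor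
`e(x) = exp(πi log x / log q)` satisfies `e(q^k x) = (-1)^k e(x)`, which turns this equation at
`-x` into the equation for `e(x) Ai_q(-x)`.
-/

open Filter Topology

lemma summable_of_succ_eq_smul {𝕜 E : Type*} [NormedField 𝕜] [NormedAddCommGroup E]
    [NormedSpace 𝕜 E] [CompleteSpace E] {f : ℕ → E} {c : ℕ → 𝕜}
    (hc : Tendsto c atTop (𝓝 0)) (hf : ∀ n, f (n + 1) = c n • f n) : Summable f := by
  refine summable_of_ratio_norm_eventually_le (r := 1 / 2) (by norm_num) ?_
  have hsmall : ∀ᶠ n in atTop, ‖c n‖ ≤ 1 / 2 := by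
    simpa using hc.norm.eventually (ge_mem_nhds (by norm_num : (‖(0 : 𝕜)‖) < 1 / 2))
  filter_upwards [hsmall] with n hn
  rw [hf, norm_smul]
  exact mul_le_mul_of_nonneg_right hn (norm_nonneg _)

lemma Complex.exp_pi_mul_I_mul_log_pow_mul_div_log {q x : ℝ} (hq : Real.log q ≠ 0) (hx : x ≠ 0)
    (k : ℕ) :
    Complex.exp (Real.pi * Complex.I * Real.log (q ^ k * x) / Real.log q) =
      (-1) ^ k * Complex.exp (Real.pi * Complex.I * Real.log x / Real.log q) := by
  have hq0 : q ≠ 0 := by rintro rfl; exact hq Real.log_zero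
  have hlog : Real.log (q ^ k * x) = k * Real.log q + Real.log x := by
    rw [Real.log_mul (pow_ne_zero k hq0) hx, Real.log_pow]
  have harg : (Real.pi : ℂ) * Complex.I * (Real.log (q ^ k * x) : ℂ) / Real.log q =
      k * (Real.pi * Complex.I) + Real.pi * Complex.I * Real.log x / Real.log q := by
    have hqC : (Real.log q : ℂ) ≠ 0 := by exact_mod_cast hq
    rw [hlog]
    push_cast
    field_simp
  rw [harg, Complex.exp_add, Complex.exp_nat_mul, Complex.exp_pi_mul_I]

noncomputable def qAiryTerm (q x : ℂ) (n : ℕ) : ℂ :=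
  (-1) ^ n * q ^ (n * (n - 1) / 2) * (-x) ^ n / (qPoch q (-q) n * qPoch q q n)

lemma qAiry_eq_tsum_qAiryTerm (q x : ℂ) : qAiry q x = ∑' n, qAiryTerm q x n := rfl

@[simp]
lemma qAiryTerm_zero (q x : ℂ) : qAiryTerm q x 0 = 1 := by
  simp [qAiryTerm, qPoch]

lemma qAiryTerm_mul (q t x : ℂ) (n : ℕ) : qAiryTerm q (t * x) n = t ^ n * qAiryTerm q x n := by
  unfold qAiryTerm
  ring

lemma qAiryTerm_succ (q x : ℂ) (n : ℕ) :
    qAiryTerm q x (n + 1) = x * q ^ n / ((1 + q * q ^ n) * (1 - q * q ^ n)) * qAiryTerm q x n := by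
  have hexp : (n + 1) * n / 2 = n * (n - 1) / 2 + n := by
    rcases n with _ | m
    · rfl
    · have hdvd : 2 ∣ (m + 1) * m := (Nat.even_mul_succ_self m).two_dvd.trans (by rw [mul_comm])
      have hsucc : (m + 1 + 1) * (m + 1) = (m + 1) * m + 2 * (m + 1) := by ring
      simp only [Nat.add_sub_cancel]
      omega
  simp only [qAiryTerm, qPoch, Finset.prod_range_succ, Nat.add_sub_cancel, hexp, pow_add,
    pow_succ, div_mul_div_comm]
  congr 1 <;> ring

section NormLtOne

variable {q : ℂ} (hq : ‖q‖ < 1)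
include hq

lemma qAiryTerm_ratio_tendsto_zero (x : ℂ) :
    Tendsto (fun n : ℕ => x * q ^ n / ((1 + q * q ^ n) * (1 - q * q ^ n))) atTop (𝓝 0) := by
  have hpow : Tendsto (fun n : ℕ => q ^ n) atTop (𝓝 0) :=
    tendsto_pow_atTop_nhds_zero_of_norm_lt_one hq
  have hlim := (hpow.const_mul x).div
    ((tendsto_const_nhds.add (hpow.const_mul q)).mul (tendsto_const_nhds.sub (hpow.const_mul q)))
    (by simp : ((1 : ℂ) + q * 0) * (1 - q * 0) ≠ 0)
  rw [mul_zero, zero_div] at hlim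
  exact hlim

lemma summable_qAiryTerm (x : ℂ) : Summable (qAiryTerm q x) :=
  summable_of_succ_eq_smul (qAiryTerm_ratio_tendsto_zero hq x) (qAiryTerm_succ q x)

lemma one_add_mul_one_sub_mul_pow_ne_zero (n : ℕ) : (1 + q * q ^ n) * (1 - q * q ^ n) ≠ 0 := by
  have hlt : ‖q * q ^ n‖ < 1 := by
    rw [← pow_succ', norm_pow]
    exact pow_lt_one₀ (norm_nonneg q) hq n.succ_ne_zero
  refine mul_ne_zero (fun h => ?_) (fun h => ?_)
  · rw [eq_neg_of_add_eq_zero_right h, norm_neg, norm_one] at hlt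
    exact lt_irrefl _ hlt
  · rw [← sub_eq_zero.mp h, norm_one] at hlt
    exact lt_irrefl _ hlt

lemma qAiryTerm_sq_mul_succ_sub (x : ℂ) (n : ℕ) :
    qAiryTerm q (q ^ 2 * x) (n + 1) - qAiryTerm q x (n + 1) = -x * qAiryTerm q (q * x) n := by
  have hden := one_add_mul_one_sub_mul_pow_ne_zero hq n
  rw [qAiryTerm_mul, qAiryTerm_mul, qAiryTerm_succ]
  set D := (1 + q * q ^ n) * (1 - q * q ^ n) with hD
  have hpow : (q ^ 2) ^ (n + 1) = 1 - D := by rw [hD]; ring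
  rw [hpow]
  field_simp
  ring

theorem qAiry_q_difference (x : ℂ) :
    qAiry q (q ^ 2 * x) + x * qAiry q (q * x) - qAiry q x = 0 := by
  have hdiff := (summable_qAiryTerm hq (q ^ 2 * x)).sub (summable_qAiryTerm hq x)
  have hshift : qAiry q (q ^ 2 * x) - qAiry q x = -x * qAiry q (q * x) := by
    rw [qAiry_eq_tsum_qAiryTerm, qAiry_eq_tsum_qAiryTerm, qAiry_eq_tsum_qAiryTerm,
      ← (summable_qAiryTerm hq _).tsum_sub (summable_qAiryTerm hq _), hdiff.tsum_eq_zero_add]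
    simp only [qAiryTerm_zero, sub_self, zero_add, qAiryTerm_sq_mul_succ_sub hq, tsum_mul_left]
  linear_combination hshift

end NormLtOne

theorem qAiry_second_solution (q : ℝ) (hq0 : 0 < q) (hq1 : q < 1) (x : ℝ) (hx : 0 < x) :
    Complex.exp (Real.pi * Complex.I * Real.log (q ^ 2 * x) / Real.log q) *
        qAiry (q : ℂ) (-(q ^ 2 * x : ℝ)) +
      (x : ℂ) * (Complex.exp (Real.pi * Complex.I * Real.log (q * x) / Real.log q) *
        qAiry (q : ℂ) (-(q * x : ℝ))) -
      Complex.exp (Real.pi * Complex.I * Real.log x / Real.log q) * qAiry (q : ℂ) (-x : ℝ) = 0 := by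
  have hlog : Real.log q ≠ 0 := (Real.log_neg hq0 hq1).ne
  have hnorm : ‖(q : ℂ)‖ < 1 := by rwa [Complex.norm_real, Real.norm_of_nonneg hq0.le]
  have hexp₁ := Complex.exp_pi_mul_I_mul_log_pow_mul_div_log hlog hx.ne' 1
  have hexp₂ := Complex.exp_pi_mul_I_mul_log_pow_mul_div_log hlog hx.ne' 2
  rw [pow_one] at hexp₁
  have hAiry := qAiry_q_difference hnorm (-x)
  rw [mul_neg, mul_neg] at hAiry
  rw [hexp₁, hexp₂]
  push_cast
  linear_combination Complex.exp (Real.pi * Complex.I * Real.log x / Real.log q) * hAiry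
end

section
/- Let q ∈ ℂ with 0 < |q| < 1 and let t ∈ ℂ, t ≠ 0, with t not an integer power of q. Then the function z(t) = A_{q²}(−q³t²) / θ_q(−q²t) satisfies the q-difference equation −z(q²t) + (1/(q²t))·z(qt) + z(t) = 0. -/
open scoped BigOperators

/-- The Jacobi theta function `θ_q(x)`. -/
noncomputable def jTheta (q x : ℂ) : ℂ := ∑' n : ℤ, q ^ (n * (n - 1) / 2) * x ^ n

/-- `z(t) = A_{q²}(−q³t²) / θ_q(−q²t)`. -/
noncomputable def zRam (q t : ℂ) : ℂ :=
  (∑' n : ℕ, q ^ (2 * n ^ 2) * (q ^ 3 * t ^ 2) ^ n / qPoch (q ^ 2) (q ^ 2) n) /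
    jTheta q (-(q ^ 2 * t))

/-!
The numerator `A(x) = A_{q²}(x)` satisfies `A(x) = A(q²x) - q²x·A(q⁴x)`, which
follows termwise from `(p;p)_{n+1} = (p;p)_n (1 - p^{n+1})`, and the theta function satisfies
`θ_q(x) = x·θ_q(qx)`, which is the shift `n ↦ n + 1` of its summation index. Writing all three
values of `z` over the common denominator `θ_q(-q⁴t)`, the q-difference equation becomes
the functional equation of `A` at `x = -q³t²`.
-/

open Filter Topology

lemma qPoch_succ (q a : ℂ) (n : ℕ) : qPoch q a (n + 1) = qPoch q a n * (1 - a * q ^ n) :=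
  Finset.prod_range_succ _ _

lemma one_sub_norm_le_norm_one_sub_mul_pow {q a : ℂ} (hq : ‖q‖ ≤ 1) (n : ℕ) :
    1 - ‖a‖ ≤ ‖1 - a * q ^ n‖ := by
  have h : ‖a * q ^ n‖ ≤ ‖a‖ := by
    rw [norm_mul, norm_pow]
    exact mul_le_of_le_one_right (norm_nonneg a) (pow_le_one₀ (norm_nonneg q) hq)
  have := norm_sub_norm_le (1 : ℂ) (a * q ^ n)
  rw [norm_one] at this
  linarith

section Ramanujan

variable {p : ℂ}

noncomputable def ramanujanTerm (p x : ℂ) (n : ℕ) : ℂ := p ^ (n ^ 2) * (-x) ^ n / qPoch p p n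

noncomputable def ramanujanA (p x : ℂ) : ℂ := ∑' n, ramanujanTerm p x n

lemma ramanujanTerm_zero (p x : ℂ) : ramanujanTerm p x 0 = 1 := by
  simp [ramanujanTerm, qPoch]

lemma ramanujanTerm_succ (p x : ℂ) (n : ℕ) :
    ramanujanTerm p x (n + 1) =
      ramanujanTerm p x n * (p ^ (2 * n + 1) * -x / (1 - p * p ^ n)) := by
  rw [ramanujanTerm, ramanujanTerm, qPoch_succ, mul_div_mul_comm]
  ring

lemma norm_ramanujanTerm_succ_le (hp : ‖p‖ < 1) (x : ℂ) (n : ℕ) :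
    ‖ramanujanTerm p x (n + 1)‖ ≤ ‖p‖ ^ n * (‖x‖ / (1 - ‖p‖)) * ‖ramanujanTerm p x n‖ := by
  have hden := one_sub_norm_le_norm_one_sub_mul_pow (a := p) hp.le n
  have hpow : ‖p‖ ^ (2 * n + 1) ≤ ‖p‖ ^ n :=
    pow_le_pow_of_le_one (norm_nonneg p) hp.le (by omega)
  calc ‖ramanujanTerm p x (n + 1)‖
      = ‖ramanujanTerm p x n‖ * (‖p‖ ^ (2 * n + 1) * ‖x‖ / ‖1 - p * p ^ n‖) := by
        rw [ramanujanTerm_succ, norm_mul, norm_div, norm_mul, norm_pow, norm_neg]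
    _ ≤ ‖ramanujanTerm p x n‖ * (‖p‖ ^ n * ‖x‖ / (1 - ‖p‖)) := by gcongr
    _ = ‖p‖ ^ n * (‖x‖ / (1 - ‖p‖)) * ‖ramanujanTerm p x n‖ := by ring

lemma summable_ramanujanTerm (hp : ‖p‖ < 1) (x : ℂ) : Summable (ramanujanTerm p x) := by
  have hratio : Tendsto (fun n : ℕ ↦ ‖p‖ ^ n * (‖x‖ / (1 - ‖p‖))) atTop (𝓝 0) := by
    simpa using (tendsto_pow_atTop_nhds_zero_of_lt_one (norm_nonneg p) hp).mul_const
      (‖x‖ / (1 - ‖p‖))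
  refine summable_of_ratio_norm_eventually_le (r := 1 / 2) (by norm_num) ?_
  filter_upwards [hratio.eventually (ge_mem_nhds (by norm_num : (0 : ℝ) < 1 / 2))] with n hn
  exact (norm_ramanujanTerm_succ_le hp x n).trans
    (mul_le_mul_of_nonneg_right hn (norm_nonneg _))

lemma ramanujanTerm_succ_sub_ramanujanTerm_mul (hp : ‖p‖ < 1) (x : ℂ) (n : ℕ) :
    ramanujanTerm p x (n + 1) - ramanujanTerm p (p * x) (n + 1) =
      -(p * x) * ramanujanTerm p (p ^ 2 * x) n := by
  have hd : 1 - p * p ^ n ≠ 0 := norm_pos_iff.1 <|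
    (sub_pos.2 hp).trans_le (one_sub_norm_le_norm_one_sub_mul_pow hp.le n)
  rw [ramanujanTerm, ramanujanTerm, ramanujanTerm, qPoch_succ]
  field_simp
  ring

theorem ramanujanA_eq_sub (hp : ‖p‖ < 1) (x : ℂ) :
    ramanujanA p x = ramanujanA p (p * x) - p * x * ramanujanA p (p ^ 2 * x) := by
  have hsum := (summable_ramanujanTerm hp x).sub (summable_ramanujanTerm hp (p * x))
  have hdiff : ramanujanA p x - ramanujanA p (p * x) = -(p * x) * ramanujanA p (p ^ 2 * x) := by
    rw [ramanujanA, ramanujanA, ← (summable_ramanujanTerm hp x).tsum_sub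
      (summable_ramanujanTerm hp (p * x)), hsum.tsum_eq_zero_add]
    simp only [ramanujanTerm_zero, sub_self, zero_add,
      ramanujanTerm_succ_sub_ramanujanTerm_mul hp, tsum_mul_left, ramanujanA]
  linear_combination hdiff

end Ramanujan

theorem jTheta_eq_mul_jTheta_mul {q x : ℂ} (hq : q ≠ 0) (hx : x ≠ 0) :
    jTheta q x = x * jTheta q (q * x) := by
  rw [jTheta, ← (Equiv.addRight (1 : ℤ)).tsum_eq, jTheta, ← tsum_mul_left]
  congr 1 with n
  have hexp : (n + 1) * (n + 1 - 1) / 2 = n * (n - 1) / 2 + n := by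
    rw [show (n + 1) * (n + 1 - 1) = n * (n - 1) + n * 2 by ring,
      Int.add_mul_ediv_right _ _ two_ne_zero]
  simp only [Equiv.coe_addRight]
  rw [hexp, zpow_add₀ hq, zpow_add_one₀ hx, mul_zpow]
  ring

lemma zRam_eq (q t : ℂ) :
    zRam q t = ramanujanA (q ^ 2) (-(q ^ 3 * t ^ 2)) / jTheta q (-(q ^ 2 * t)) := by
  simp only [zRam, ramanujanA, ramanujanTerm, neg_neg, ← pow_mul]

theorem zRam_qDifference_equation_general (q : ℂ) (hq0 : 0 < ‖q‖)
    (hq1 : ‖q‖ < 1) (t : ℂ) (ht : t ≠ 0) :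
    -zRam q (q ^ 2 * t) + 1 / (q ^ 2 * t) * zRam q (q * t) + zRam q t = 0 := by
  have hq : q ≠ 0 := norm_pos_iff.1 hq0
  have hp : ‖q ^ 2‖ < 1 := by
    rw [norm_pow]
    exact pow_lt_one₀ (norm_nonneg q) hq1 two_ne_zero
  have hA := ramanujanA_eq_sub hp (-(q ^ 3 * t ^ 2))
  rw [show q ^ 2 * -(q ^ 3 * t ^ 2) = -(q ^ 3 * (q * t) ^ 2) by ring,
    show (q ^ 2) ^ 2 * -(q ^ 3 * t ^ 2) = -(q ^ 3 * (q ^ 2 * t) ^ 2) by ring] at hA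
  have hθ₀ : jTheta q (-(q ^ 2 * t)) = -(q ^ 2 * t) * jTheta q (-(q ^ 2 * (q * t))) := by
    convert jTheta_eq_mul_jTheta_mul hq (by simp [hq, ht] : -(q ^ 2 * t) ≠ 0) using 3; ring
  have hθ₁ : jTheta q (-(q ^ 2 * (q * t))) =
      -(q ^ 2 * (q * t)) * jTheta q (-(q ^ 2 * (q ^ 2 * t))) := by
    convert jTheta_eq_mul_jTheta_mul hq (by simp [hq, ht] : -(q ^ 2 * (q * t)) ≠ 0) using 3; ring
  rw [zRam_eq, zRam_eq, zRam_eq, hA, hθ₀, hθ₁]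
  rcases eq_or_ne (jTheta q (-(q ^ 2 * (q ^ 2 * t)))) 0 with hθ | hθ
  · -- every term has `θ_q(-q⁴t)` as a factor of its denominator, so all vanish as `x / 0 = 0`
    simp [hθ]
  · field_simp
    ring

theorem zRam_qDifference_equation (q : ℂ) (hq0 : 0 < ‖q‖)
    (hq1 : ‖q‖ < 1) (t : ℂ) (ht : t ≠ 0) (htq : ∀ m : ℤ, t ≠ q ^ m) :
    -zRam q (q ^ 2 * t) + 1 / (q ^ 2 * t) * zRam q (q * t) + zRam q t = 0 :=
  zRam_qDifference_equation_general q hq0 hq1 t ht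
end
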